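/- arXiv:2001.01342 — 8 statements merged into one kernel-verified Lean document; each statement's English description precedes it below -/
import Mathlib

section
/- For 0 < b ≤ a and v ∈ [0,1], one has (1 + (2^v v(1-v)(a-b)²)/(a^{1-v}(a+b)^{1+v})) · a^{1-v} b^v ≤ (1-v)a + vb. -/
open Real Set in
lemma tangent_le {v m t : ℝ} (hv1 : v ≤ 1) (hm : 0 < m) (ht : 0 < t) :
    m ^ (v - 2) + (v - 2) * m ^ (v - 3) * (t - m) ≤ t ^ (v - 2) := by
  set q : ℝ := 2 - v with hq
  have hq1 : 1 ≤ q := by simp [hq]; linarith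
  have h1 : 1 + q * ((m - t) / t) ≤ (m / t) ^ q := by
    have hs : (-1 : ℝ) ≤ m / t - 1 := by
      have : 0 < m / t := div_pos hm ht
      linarith
    have := one_add_mul_self_le_rpow_one_add hs hq1
    have e : 1 + (m / t - 1) = m / t := by ring
    rw [e] at this
    have e2 : (m - t) / t = m / t - 1 := by field_simp
    rw [e2]; exact this
  have h2 : 1 + q * ((m - t) / m) ≤ 1 + q * ((m - t) / t) := by
    have hd : (m - t) / m ≤ (m - t) / t := by
      rw [div_le_div_iff₀ hm ht]
      nlinarith [sq_nonneg (m - t)]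
    nlinarith [hd]
  have hmq : (0 : ℝ) < m ^ q := Real.rpow_pos_of_pos hm q
  rw [← mul_le_mul_iff_left₀ hmq]
  have e1 : m ^ (v - 2) * m ^ q = 1 := by
    rw [← Real.rpow_add hm, show v - 2 + q = 0 by rw [hq]; ring, Real.rpow_zero]
  have e2 : m ^ (v - 3) * m ^ q = m⁻¹ := by
    rw [← Real.rpow_add hm, show v - 3 + q = -1 by rw [hq]; ring, Real.rpow_neg_one]
  have e3 : t ^ (v - 2) * m ^ q = (m / t) ^ q := by
    rw [Real.div_rpow hm.le ht.le, show v - 2 = -q by rw [hq]; ring, Real.rpow_neg ht.le]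
    field_simp [mul_comm]
  calc (m ^ (v - 2) + (v - 2) * m ^ (v - 3) * (t - m)) * m ^ q
      = m ^ (v - 2) * m ^ q + (v - 2) * (m ^ (v - 3) * m ^ q) * (t - m) := by ring
    _ = 1 + q * ((m - t) / m) := by
        rw [e1, e2, hq]; field_simp; ring
    _ ≤ (m / t) ^ q := le_trans h2 h1
    _ = t ^ (v - 2) * m ^ q := e3.symm

open Real Set in
lemma gap_bound {a b v : ℝ} (hb : 0 < b) (hba : b ≤ a) (hv0 : 0 ≤ v) (hv1 : v ≤ 1) :
    v * (1 - v) * a ^ (1 - v) * ((2 * a + b) / 3) ^ (v - 2) * (a - b) ^ 2 / 2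
      ≤ (1 - v) * a + v * b - a ^ (1 - v) * b ^ v := by
  have ha : 0 < a := lt_of_lt_of_le hb hba
  set A : ℝ := a ^ (1 - v) with hA
  set m : ℝ := (2 * a + b) / 3 with hm
  have hmpos : 0 < m := by rw [hm]; linarith
  set M2 : ℝ := m ^ (v - 2) with hM2
  set M3 : ℝ := m ^ (v - 3) with hM3
  have hApos : 0 < A := Real.rpow_pos_of_pos ha _
  set Φ : ℝ → ℝ := fun t =>
    (1 - v) * a + v * t - A * t ^ v + (v - v * A * t ^ (v - 1)) * (b - t)
      + v * (1 - v) * A * (M2 * ((t - b) ^ 2 / 2)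
        + (v - 2) * M3 * ((t - b) ^ 3 / 3 - 2 * (a - b) / 3 * ((t - b) ^ 2 / 2))) with hΦ
  have hderiv : ∀ t : ℝ, 0 < t → HasDerivAt Φ
      (v * (1 - v) * A * (t - b) * (M2 + (v - 2) * M3 * (t - m) - t ^ (v - 2))) t := by
    intro t ht
    have d1 : HasDerivAt (fun t : ℝ => t ^ v) (v * t ^ (v - 1)) t :=
      Real.hasDerivAt_rpow_const (Or.inl ht.ne')
    have d2 : HasDerivAt (fun t : ℝ => t ^ (v - 1)) ((v - 1) * t ^ (v - 2)) t := by
      have h := Real.hasDerivAt_rpow_const (p := v - 1) (Or.inl ht.ne')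
      rwa [show v - 1 - 1 = v - 2 by ring] at h
    have D := ((((hasDerivAt_const t ((1 - v) * a)).add
        ((hasDerivAt_id t).const_mul v)).sub (d1.const_mul A)).add
        (HasDerivAt.mul ((hasDerivAt_const t v).sub (d2.const_mul (v * A)))
          ((hasDerivAt_const t b).sub (hasDerivAt_id t)))).add
        ((((((hasDerivAt_id t).sub_const b).pow 2).div_const 2 |>.const_mul M2).add
          (((((hasDerivAt_id t).sub_const b).pow 3).div_const 3).sub
            ((((hasDerivAt_id t).sub_const b).pow 2).div_const 2 |>.const_mul
              (2 * (a - b) / 3)) |>.const_mul ((v - 2) * M3))).const_mul (v * (1 - v) * A))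
    convert D using 1
    case e'_4 => rfl
    case e'_5 => rfl
    case e'_8 => rfl
    push_cast
    norm_num
    rw [hm]
    ring
  have hanti : AntitoneOn Φ (Icc b a) := by
    apply antitoneOn_of_hasDerivWithinAt_nonpos (convex_Icc b a)
    · intro t htI
      exact (hderiv t (lt_of_lt_of_le hb htI.1)).continuousAt.continuousWithinAt
    · intro t htI
      rw [interior_Icc] at htI
      exact (hderiv t (lt_trans hb htI.1)).hasDerivWithinAt
    · intro t htI
      rw [interior_Icc] at htI
      have htpos : 0 < t := lt_trans hb htI.1
      have htan := tangent_le hv1 hmpos htpos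
      have h1 : M2 + (v - 2) * M3 * (t - m) - t ^ (v - 2) ≤ 0 := by
        rw [hM2, hM3]; linarith
      have h2 : 0 ≤ v * (1 - v) * A * (t - b) :=
        mul_nonneg (mul_nonneg (mul_nonneg hv0 (by linarith)) hApos.le)
          (by linarith [htI.1])
      exact mul_nonpos_iff.2 (Or.inl ⟨h2, h1⟩)
  have hle : Φ a ≤ Φ b := hanti ⟨le_refl b, hba⟩ ⟨hba, le_refl a⟩ hba
  have ea1 : A * a ^ v = a := by
    rw [hA, ← Real.rpow_add ha, show 1 - v + v = 1 by ring, Real.rpow_one]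
  have ea2 : A * a ^ (v - 1) = 1 := by
    rw [hA, ← Real.rpow_add ha, show 1 - v + (v - 1) = 0 by ring, Real.rpow_zero]
  have hΦb : Φ b = (1 - v) * a + v * b - A * b ^ v := by
    rw [hΦ]; ring
  have hΦa : Φ a = v * (1 - v) * A * M2 * (a - b) ^ 2 / 2 := by
    have e : Φ a = (1 - v) * a + v * a - A * a ^ v + (v - v * (A * a ^ (v - 1))) * (b - a)
        + v * (1 - v) * A * (M2 * ((a - b) ^ 2 / 2)
          + (v - 2) * M3 * ((a - b) ^ 3 / 3 - 2 * (a - b) / 3 * ((a - b) ^ 2 / 2))) := by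
      rw [hΦ]; ring
    rw [e, ea1, ea2]; ring
  rw [hΦa, hΦb] at hle
  linarith

open Real Set in
lemma compare_bound {a b v : ℝ} (hb : 0 < b) (hba : b ≤ a) (hv0 : 0 ≤ v) (hv1 : v ≤ 1) :
    2 ^ v * v * (1 - v) * (a - b) ^ 2 * b ^ v / (a + b) ^ (1 + v)
      ≤ v * (1 - v) * a ^ (1 - v) * ((2 * a + b) / 3) ^ (v - 2) * (a - b) ^ 2 / 2 := by
  have ha : 0 < a := lt_of_lt_of_le hb hba
  have hab : 0 < a + b := by linarith
  set m : ℝ := (2 * a + b) / 3 with hm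
  have hmpos : 0 < m := by rw [hm]; positivity
  have hW : (0 : ℝ) < (a + b) ^ (1 + v) := Real.rpow_pos_of_pos hab _
  have hMq : (0 : ℝ) < m ^ (2 - v) := Real.rpow_pos_of_pos hmpos _
  have hP : (0 : ℝ) < a ^ v * m ^ v := by positivity
  have r1 : (2 * a * b) ^ v = 2 ^ v * a ^ v * b ^ v := by
    rw [Real.mul_rpow (by positivity) hb.le, Real.mul_rpow (by norm_num) ha.le]
  have r2 : ((a + b) * m) ^ v = (a + b) ^ v * m ^ v := Real.mul_rpow hab.le hmpos.le
  have r3 : m ^ (2 - v) * m ^ v = m * m := by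
    rw [← Real.rpow_add hmpos, show (2 : ℝ) - v + v = ((2:ℕ):ℝ) by push_cast; ring,
      Real.rpow_natCast]
    ring
  have r4 : a ^ (1 - v) * a ^ v = a := by
    rw [← Real.rpow_add ha, show (1 : ℝ) - v + v = 1 by ring, Real.rpow_one]
  have r5 : (a + b) ^ (1 + v) = (a + b) * (a + b) ^ v := by
    rw [Real.rpow_add hab, Real.rpow_one]
  have h1 : (2 * a * b) ^ v ≤ ((a + b) * m) ^ v := by
    apply Real.rpow_le_rpow (by positivity) _ hv0
    rw [hm]
    nlinarith [mul_nonneg (sub_nonneg.2 hba) (by linarith : (0:ℝ) ≤ 2 * a - b)]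
  have h2 : 2 * (m * m) ≤ a * (a + b) := by
    rw [hm]
    nlinarith [mul_nonneg (sub_nonneg.2 hba) (by linarith : (0:ℝ) ≤ a + 2 * b)]
  have key : 2 ^ v * b ^ v * 2 * m ^ (2 - v) ≤ a ^ (1 - v) * (a + b) ^ (1 + v) := by
    rw [← mul_le_mul_iff_left₀ hP]
    calc 2 ^ v * b ^ v * 2 * m ^ (2 - v) * (a ^ v * m ^ v)
        = 2 * (m * m) * (2 ^ v * a ^ v * b ^ v) := by
          linear_combination (2 * 2 ^ v * b ^ v * a ^ v) * r3
      _ = 2 * (m * m) * (2 * a * b) ^ v := by rw [r1]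
      _ ≤ a * (a + b) * ((a + b) * m) ^ v := by
          apply mul_le_mul h2 h1 (by positivity) (by positivity)
      _ = a ^ (1 - v) * (a + b) ^ (1 + v) * (a ^ v * m ^ v) := by
          rw [r2, r5]
          linear_combination (-((a + b) * (a + b) ^ v * m ^ v)) * r4
  have e0 : m ^ (v - 2) * m ^ (2 - v) = 1 := by
    rw [← Real.rpow_add hmpos, show v - 2 + (2 - v) = 0 by ring, Real.rpow_zero]
  have c2 : (0:ℝ) ≤ v * (1 - v) * (a - b) ^ 2 :=
    mul_nonneg (mul_nonneg hv0 (by linarith)) (sq_nonneg _)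
  rw [div_le_div_iff₀ hW two_pos, ← mul_le_mul_iff_left₀ hMq]
  calc 2 ^ v * v * (1 - v) * (a - b) ^ 2 * b ^ v * 2 * m ^ (2 - v)
      = v * (1 - v) * (a - b) ^ 2 * (2 ^ v * b ^ v * 2 * m ^ (2 - v)) := by ring
    _ ≤ v * (1 - v) * (a - b) ^ 2 * (a ^ (1 - v) * (a + b) ^ (1 + v)) :=
        mul_le_mul_of_nonneg_left key c2
    _ = v * (1 - v) * a ^ (1 - v) * m ^ (v - 2) * (a - b) ^ 2 * (a + b) ^ (1 + v)
          * m ^ (2 - v) := by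
        linear_combination (v * (1 - v) * a ^ (1 - v) * (a - b) ^ 2 * (a + b) ^ (1 + v)) * e0.symm

theorem stmt0 (a b v : ℝ) (hb : 0 < b) (hba : b ≤ a) (hv : v ∈ Set.Icc (0:ℝ) 1) :
    (1 + (2 ^ v * v * (1 - v) * (a - b) ^ 2) / (a ^ (1 - v) * (a + b) ^ (1 + v))) *
      (a ^ (1 - v) * b ^ v) ≤ (1 - v) * a + v * b := by
  obtain ⟨hv0, hv1⟩ := hv
  have ha : 0 < a := lt_of_lt_of_le hb hba
  have hab : 0 < a + b := by linarith
  have hApos : (0:ℝ) < a ^ (1 - v) := Real.rpow_pos_of_pos ha _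
  have hW : (0:ℝ) < (a + b) ^ (1 + v) := Real.rpow_pos_of_pos hab _
  have expand : (1 + (2 ^ v * v * (1 - v) * (a - b) ^ 2) /
        (a ^ (1 - v) * (a + b) ^ (1 + v))) * (a ^ (1 - v) * b ^ v)
      = a ^ (1 - v) * b ^ v
        + 2 ^ v * v * (1 - v) * (a - b) ^ 2 * b ^ v / (a + b) ^ (1 + v) := by
    field_simp
  rw [expand]
  have g := gap_bound hb hba hv0 hv1
  have c := compare_bound hb hba hv0 hv1
  linarith
end

section
/- For 0 < b ≤ a and v ∈ [0,1], one has (1-v)a + vb ≤ (1 + (v(1-v)(a-b)²)/(2 a^{1-v} b^{1+v})) · a^{1-v} b^v. -/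
open Real Set

/-- Bernoulli for exponents in [-1,0] and nonneg x. -/
lemma bern_neg {p x : ℝ} (hp1 : -1 ≤ p) (hp2 : p ≤ 0) (hx : 0 ≤ x) :
    1 + p * x ≤ (1 + x) ^ p := by
  have hx1 : (0:ℝ) < 1 + x := by linarith
  have h1 : (1 + x) ^ (-p) ≤ 1 + (-p) * x :=
    rpow_one_add_le_one_add_mul_self (by linarith) (by linarith) (by linarith)
  have hpos : (0:ℝ) < (1 + x) ^ (-p) := Real.rpow_pos_of_pos hx1 _
  have hrw : (1 + x) ^ p = ((1 + x) ^ (-p))⁻¹ := by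
    rw [← Real.rpow_neg hx1.le, neg_neg]
  rw [hrw]
  rcases le_or_gt (1 + p * x) 0 with h | h
  · exact h.trans (inv_pos.mpr hpos).le
  · rw [le_inv_comm₀ h hpos]
    calc (1 + x) ^ (-p) ≤ 1 + (-p) * x := h1
      _ ≤ (1 + p * x)⁻¹ := by
        rw [show (1 + p * x)⁻¹ = 1 / (1 + p * x) by ring, le_div_iff₀ h]
        nlinarith [sq_nonneg (p * x)]

lemma key {w s : ℝ} (hw0 : 0 ≤ w) (hw1 : w ≤ 1) (hs : 0 ≤ s) :
    1 + w * s ≤ (1 + s) ^ w + w * (1 - w) * s ^ 2 / 2 := by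
  set f : ℝ → ℝ := fun s => (1 + s) ^ w + w * (1 - w) * s ^ 2 / 2 - (1 + w * s) with hf
  have hderiv : ∀ x ∈ interior (Ici (0:ℝ)), HasDerivAt f
      (w * (1 + x) ^ (w - 1) + w * (1 - w) * x - w) x := by
    intro x hx
    rw [interior_Ici] at hx
    have hx0 : (0:ℝ) < 1 + x := by have := hx.out; linarith
    have h1 : HasDerivAt (fun s : ℝ => (1 + s) ^ w) (w * (1 + x) ^ (w - 1)) x := by
      have := (Real.hasDerivAt_rpow_const (x := 1 + x) (p := w) (Or.inl hx0.ne')).comp x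
        ((hasDerivAt_id x).const_add 1)
      simpa [Function.comp_def] using this
    have h2 : HasDerivAt (fun s : ℝ => w * (1 - w) * s ^ 2 / 2 - (1 + w * s))
        (w * (1 - w) * x - w) x := by
      have : HasDerivAt (fun s : ℝ => w * (1 - w) * s ^ 2 / 2 - (1 + w * s))
          (w * (1 - w) * (2 * x ^ 1) / 2 - (w * 1)) x := by
        apply HasDerivAt.sub
        · exact ((hasDerivAt_pow 2 x).const_mul _).div_const 2
        · exact ((hasDerivAt_id x).const_mul w).const_add 1
      convert this using 1; ring
    simpa [hf, add_sub_assoc, Pi.add_def] using h1.add h2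
  have hmono : MonotoneOn f (Ici (0:ℝ)) := by
    apply monotoneOn_of_deriv_nonneg (convex_Ici 0)
    · apply ContinuousOn.sub
      apply ContinuousOn.add
      · exact (continuousOn_const.add continuousOn_id).rpow_const
          (fun x hx => Or.inl (ne_of_gt (by have h0 : (0:ℝ) ≤ x := hx; change (0:ℝ) < 1 + x; linarith)))
      · fun_prop
      · fun_prop
    · intro x hx
      exact (hderiv x hx).differentiableAt.differentiableWithinAt
    · intro x hx
      rw [(hderiv x hx).deriv]
      rw [interior_Ici] at hx
      have hx0 : (0:ℝ) < x := hx
      have hb : 1 + (w - 1) * x ≤ (1 + x) ^ (w - 1) :=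
        bern_neg (by linarith) (by linarith) hx0.le
      nlinarith [mul_le_mul_of_nonneg_left hb hw0]
  have h0 : f 0 = 0 := by simp [hf]
  have := hmono (self_mem_Ici) (mem_Ici.mpr hs) hs
  rw [h0] at this
  simp only [hf] at this
  linarith

theorem stmt1 (a b v : ℝ) (hb : 0 < b) (hba : b ≤ a) (hv : v ∈ Set.Icc (0:ℝ) 1) :
    (1 - v) * a + v * b ≤
      (1 + (v * (1 - v) * (a - b) ^ 2) / (2 * a ^ (1 - v) * b ^ (1 + v))) *
        (a ^ (1 - v) * b ^ v) := by
  obtain ⟨hv0, hv1⟩ := hv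
  have ha : 0 < a := hb.trans_le hba
  set s : ℝ := (a - b) / b with hs
  have hs0 : 0 ≤ s := div_nonneg (by linarith) hb.le
  have hab : a = b * (1 + s) := by
    have h := div_mul_cancel₀ (a - b) hb.ne'; rw [hs]; linarith [h]
  set w : ℝ := 1 - v with hw
  have hA : a ^ (1 - v) = b ^ (1 - v) * (1 + s) ^ w := by
    rw [hab, Real.mul_rpow hb.le (by linarith)]
  have hbv : b ^ (1 + v) = b * b ^ v := by
    rw [Real.rpow_add hb, Real.rpow_one]
  have hbb : b ^ (1 - v) * b ^ v = b := by
    rw [← Real.rpow_add hb]; simp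
  have hApos : (0:ℝ) < a ^ (1 - v) := Real.rpow_pos_of_pos ha _
  have hBpos : (0:ℝ) < b ^ v := Real.rpow_pos_of_pos hb _
  have hSpos : (0:ℝ) < (1 + s) ^ w := Real.rpow_pos_of_pos (by linarith) _
  have hRHS : (1 + (v * (1 - v) * (a - b) ^ 2) / (2 * a ^ (1 - v) * b ^ (1 + v))) *
        (a ^ (1 - v) * b ^ v)
      = a ^ (1 - v) * b ^ v + v * (1 - v) * (a - b) ^ 2 / (2 * b) := by
    rw [hbv]
    field_simp
  rw [hRHS]
  have hAB : a ^ (1 - v) * b ^ v = b * (1 + s) ^ w := by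
    rw [hA]; rw [mul_right_comm, hbb]
  rw [hAB]
  have hkey := key (w := w) (s := s) (by simp [hw]; linarith) (by simp [hw]; linarith) hs0
  have habs : a - b = b * s := by
    have h := div_mul_cancel₀ (a - b) hb.ne'; rw [hs]; linarith [h]
  rw [habs]
  have : v * (1 - v) = w * (1 - w) := by simp [hw]; ring
  rw [this]
  have hexp : (b * s) ^ 2 / (2 * b) = b * s ^ 2 / 2 := by
    field_simp
  calc (1 - v) * a + v * b = b * (1 + w * s) := by rw [hab]; simp [hw]; ring
    _ ≤ b * ((1 + s) ^ w + w * (1 - w) * s ^ 2 / 2) := by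
        exact mul_le_mul_of_nonneg_left hkey hb.le
    _ = b * (1 + s) ^ w + w * (1 - w) * (b * s) ^ 2 / (2 * b) := by
        field_simp
end

section
/- For 0 < x ≤ 1 and 0 < v ≤ 1, it holds that 1 - 1/x ≤ (1/M_v(x))·((1-v)/v + x) - 1/v, where M_v(x) = 1 + v(1-v)(x-1)²/(2x^{v+1}). -/
theorem stmt2 (x v : ℝ) (hx : 0 < x) (hx1 : x ≤ 1) (hv : 0 < v) (hv1 : v ≤ 1) :
    1 - 1 / x ≤
      (1 / (1 + v * (1 - v) * (x - 1) ^ 2 / (2 * x ^ (v + 1)))) * ((1 - v) / v + x) - 1 / v := by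
  set P : ℝ := x ^ (v + 1) with hPdef
  have hP : 0 < P := Real.rpow_pos_of_pos hx _
  -- Bernoulli / tangent line bound
  have htan : 1 + (v + 1) * (x - 1) ≤ P := by
    have := one_add_mul_self_le_rpow_one_add (s := x - 1) (by linarith) (p := v + 1) (by linarith)
    simpa [hPdef] using this
  -- key inequality
  have key : (1 - v) * ((v + 1) * x - v) ≤ 2 * P := by
    rcases le_or_gt ((v + 1) * x - v) 0 with hc | hc
    · nlinarith [hP, mul_nonpos_of_nonneg_of_nonpos (by linarith : (0:ℝ) ≤ 1 - v) hc]
    · nlinarith [htan, hc, hv]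
  have hD : 0 ≤ v * (1 - v) * (x - 1) ^ 2 / (2 * P) := by
    apply div_nonneg
    · exact mul_nonneg (mul_nonneg hv.le (by linarith)) (sq_nonneg _)
    · positivity
  have hM : 0 < 1 + v * (1 - v) * (x - 1) ^ 2 / (2 * P) := by linarith
  have h1 : (1 - 1 / x + 1 / v) * (1 + v * (1 - v) * (x - 1) ^ 2 / (2 * P)) ≤ (1 - v) / v + x := by
    have hx0 : x ≠ 0 := hx.ne'
    have hv0 : v ≠ 0 := hv.ne'
    have hP0 : (2 : ℝ) * P ≠ 0 := by positivity
    have hdiff : ((1 - v) / v + x) - (1 - 1 / x + 1 / v) * (1 + v * (1 - v) * (x - 1) ^ 2 / (2 * P))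
        = (v * (x - 1) ^ 2 * (2 * P - (x * v - v + x) * (1 - v))) / (2 * P * x * v) := by
      field_simp
      ring
    rw [← sub_nonneg, hdiff]
    apply div_nonneg
    · refine mul_nonneg (mul_nonneg hv.le (sq_nonneg _)) ?_
      nlinarith [key]
    · positivity
  have h2 : 1 - 1 / x + 1 / v ≤ ((1 - v) / v + x) / (1 + v * (1 - v) * (x - 1) ^ 2 / (2 * P)) := by
    rw [le_div_iff₀ hM]
    exact h1
  have h3 : (1 / (1 + v * (1 - v) * (x - 1) ^ 2 / (2 * P))) * ((1 - v) / v + x)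
      = ((1 - v) / v + x) / (1 + v * (1 - v) * (x - 1) ^ 2 / (2 * P)) := by
    ring
  rw [h3]
  linarith
end

section
/- For 0 < x ≤ 1 and 0 < v ≤ 1, the function g(v,x) = 2x^{v+1} - (1-v)((1+v)x - v) is nonnegative. -/
theorem stmt3 (x v : ℝ) (hx : 0 < x) (hx1 : x ≤ 1) (hv : 0 < v) (hv1 : v ≤ 1) :
    0 ≤ 2 * x ^ (v + 1) - (1 - v) * ((1 + v) * x - v) := by
  rcases eq_or_lt_of_le hv1 with rfl | hv1'
  · have h2 : x ^ ((1:ℝ) + 1) = x ^ (2:ℕ) := by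
      rw [show ((1:ℝ)+1) = ((2:ℕ):ℝ) by norm_num, Real.rpow_natCast]
    rw [h2]
    nlinarith [sq_nonneg x, hx.le]
  · set a : ℝ := ((1 - v) / 2) ^ (1 / v) with ha_def
    have hb0 : (0:ℝ) < (1 - v) / 2 := by linarith
    have hb1 : (1 - v) / 2 ≤ 1 := by linarith
    have ha0 : 0 < a := Real.rpow_pos_of_pos hb0 _
    have ha1 : a ≤ 1 := Real.rpow_le_one hb0.le hb1 (by positivity)
    have hav' : a ^ v = (1 - v) / 2 := by
      rw [ha_def, ← Real.rpow_mul hb0.le, one_div, inv_mul_cancel₀ hv.ne', Real.rpow_one]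
    have hs : -1 ≤ x / a - 1 := by
      have : 0 < x / a := div_pos hx ha0
      linarith
    have hp : 1 ≤ v + 1 := by linarith
    have hbern := one_add_mul_self_le_rpow_one_add hs hp
    rw [show 1 + (x / a - 1) = x / a by ring] at hbern
    have hdiv : (x / a) ^ (v + 1) = x ^ (v + 1) / a ^ (v + 1) :=
      Real.div_rpow hx.le ha0.le _
    have hap : a ^ (v + 1) = (1 - v) / 2 * a := by
      rw [Real.rpow_add ha0, Real.rpow_one, hav']
    have hapos : 0 < a ^ (v + 1) := Real.rpow_pos_of_pos ha0 _
    have key : (1 + (v + 1) * (x / a - 1)) * a ^ (v + 1) ≤ x ^ (v + 1) := by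
      rw [hdiv] at hbern
      calc (1 + (v + 1) * (x / a - 1)) * a ^ (v + 1)
          ≤ x ^ (v + 1) / a ^ (v + 1) * a ^ (v + 1) := by
            exact mul_le_mul_of_nonneg_right hbern hapos.le
        _ = x ^ (v + 1) := div_mul_cancel₀ _ hapos.ne'
    have hxa : x / a * a = x := div_mul_cancel₀ x ha0.ne'
    rw [hap] at key
    have heq : (1 + (v + 1) * (x / a - 1)) * ((1 - v) / 2 * a)
        = (1 - v) / 2 * (a + (v + 1) * (x - a)) := by
      field_simp
    rw [heq] at key
    nlinarith [key, mul_pos hv hb0, mul_nonneg (mul_nonneg hv.le (by linarith : (0:ℝ) ≤ 1 - v)) (by linarith : (0:ℝ) ≤ 1 - a)]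
end

section
/- For 0 < x ≤ 1 and 0 < v ≤ 1, it holds that (1/m_v(x))·((1-v)/v + x) - 1/v ≤ x - 1, where m_v(x) = 1 + 2^v v(1-v)(x-1)²/(x+1)^{v+1}. -/
theorem stmt4 (x v : ℝ) (hx : 0 < x) (hx1 : x ≤ 1) (hv : 0 < v) (hv1 : v ≤ 1) :
    (1 / (1 + 2 ^ v * v * (1 - v) * (x - 1) ^ 2 / (x + 1) ^ (v + 1))) * ((1 - v) / v + x) - 1 / v
      ≤ x - 1 := by
  have hxp : (0:ℝ) < x + 1 := by linarith
  have hc : 0 ≤ 2 ^ v * v * (1 - v) * (x - 1) ^ 2 / (x + 1) ^ (v + 1) := by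
    apply div_nonneg
    · have h2 : (0:ℝ) < (2:ℝ) ^ v := Real.rpow_pos_of_pos (by norm_num) v
      have h1v : 0 ≤ 1 - v := by linarith
      positivity
    · exact (Real.rpow_pos_of_pos hxp (v + 1)).le
  have hA : 0 ≤ (1 - v) / v + x := by
    have : 0 ≤ (1 - v) / v := div_nonneg (by linarith) hv.le
    linarith
  have hm : 1 ≤ 1 + 2 ^ v * v * (1 - v) * (x - 1) ^ 2 / (x + 1) ^ (v + 1) := by linarith
  have h := div_le_self hA hm
  have heq : (1 - v) / v + x - 1 / v = x - 1 := by field_simp; ring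
  have hmul : (1 / (1 + 2 ^ v * v * (1 - v) * (x - 1) ^ 2 / (x + 1) ^ (v + 1))) *
      ((1 - v) / v + x) = ((1 - v) / v + x) / (1 + 2 ^ v * v * (1 - v) * (x - 1) ^ 2 / (x + 1) ^ (v + 1)) := by
    ring
  linarith [hmul, h, heq]
end

section
/- Let A, B be positive invertible operators on a Hilbert space with spectra contained in an interval J ⊂ (0,∞), and v ∈ [-1,0) ∪ (0,1]. Then for any s ∈ J, T_v(A|B) ≤ (ln_v s)·A + s^{v-1}(B - sA), where T_v(A|B) = (A♮_v B - A)/v. -/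
set_option synthInstance.maxHeartbeats 1000000
set_option maxHeartbeats 1000000

variable {H : Type*} [NormedAddCommGroup H] [InnerProductSpace ℂ H] [CompleteSpace H]

/-- The weighted geometric-type mean `A ♮_v B = A^{1/2} (A^{-1/2} B A^{-1/2})^v A^{1/2}`. -/
noncomputable def opNatural (v : ℝ) (A B : H →L[ℂ] H) : H →L[ℂ] H :=
  CFC.sqrt A *
    cfc (fun x : ℝ => x ^ v) (Ring.inverse (CFC.sqrt A) * B * Ring.inverse (CFC.sqrt A)) *
    CFC.sqrt A

/-- Tsallis relative operator entropy `T_v(A|B) = (A ♮_v B - A)/v`. -/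
noncomputable def Tsallis (v : ℝ) (A B : H →L[ℂ] H) : H →L[ℂ] H :=
  v⁻¹ • (opNatural v A B - A)


private lemma bern_le {w t : ℝ} (hw0 : 0 ≤ w) (hw1 : w ≤ 1) (ht : 0 < t) :
    t ^ w ≤ 1 + w * (t - 1) := by
  have h := rpow_one_add_le_one_add_mul_self (s := t - 1) (by linarith) hw0 hw1
  rwa [show (1:ℝ) + (t - 1) = t by ring] at h

private lemma bern_ge {v t : ℝ} (hv1 : -1 ≤ v) (hv0 : v < 0) (ht : 0 < t) :
    1 + v * (t - 1) ≤ t ^ v := by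
  have hb : t ^ (-v) ≤ 1 + (-v) * (t - 1) := bern_le (by linarith) (by linarith) ht
  have htw : 0 < t ^ (-v) := Real.rpow_pos_of_pos ht _
  rcases le_or_gt (1 + v * (t - 1)) 0 with h | h
  · exact h.trans (Real.rpow_pos_of_pos ht v).le
  · have key : (1 + v * (t - 1)) * t ^ (-v) ≤ 1 := by
      calc (1 + v * (t - 1)) * t ^ (-v)
          ≤ (1 + v * (t - 1)) * (1 + (-v) * (t - 1)) :=
            mul_le_mul_of_nonneg_left hb h.le
        _ = 1 - (v * (t - 1)) ^ 2 := by ring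
        _ ≤ 1 := by nlinarith [sq_nonneg (v * (t - 1))]
    have htv : t ^ v = (t ^ (-v))⁻¹ := by
      rw [← Real.rpow_neg ht.le, neg_neg]
    rw [htv, ← one_div, le_div_iff₀ htw]
    exact key

private lemma scalar_key {v : ℝ} (hv : v ∈ Set.Ico (-1:ℝ) 0 ∪ Set.Ioc (0:ℝ) 1)
    {s x : ℝ} (hs : 0 < s) (hx : 0 < x) :
    v⁻¹ * (x ^ v - 1) ≤ (s ^ v - 1) / v + s ^ (v - 1) * (x - s) := by
  have hsv : (0:ℝ) < s ^ v := Real.rpow_pos_of_pos hs v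
  have hxs : 0 < x / s := div_pos hx hs
  have hsv1 : s ^ (v - 1) = s ^ v / s := by
    rw [Real.rpow_sub hs, Real.rpow_one]
  have hdiv : (x / s) ^ v = x ^ v / s ^ v := Real.div_rpow hx.le hs.le v
  rcases hv with ⟨hv1, hv0⟩ | ⟨hv0, hv1⟩
  · -- v < 0
    have h := bern_ge hv1 hv0 hxs
    rw [hdiv] at h
    have h2 : s ^ v + v * (s ^ (v - 1) * (x - s)) ≤ x ^ v := by
      have h3 := mul_le_mul_of_nonneg_left h hsv.le
      rw [mul_div_cancel₀ _ hsv.ne'] at h3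
      calc s ^ v + v * (s ^ (v - 1) * (x - s))
          = s ^ v * (1 + v * (x / s - 1)) := by rw [hsv1]; field_simp
        _ ≤ x ^ v := h3
    have hvinv : v * v⁻¹ = 1 := mul_inv_cancel₀ hv0.ne
    have hvineg : v⁻¹ < 0 := inv_neg''.mpr hv0
    have h4 : v⁻¹ * x ^ v ≤ v⁻¹ * s ^ v + s ^ (v - 1) * (x - s) := by
      calc v⁻¹ * x ^ v ≤ v⁻¹ * (s ^ v + v * (s ^ (v - 1) * (x - s))) :=
            mul_le_mul_of_nonpos_left h2 hvineg.le
        _ = v⁻¹ * s ^ v + (v * v⁻¹) * (s ^ (v - 1) * (x - s)) := by ring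
        _ = v⁻¹ * s ^ v + s ^ (v - 1) * (x - s) := by rw [hvinv]; ring
    rw [div_eq_mul_inv]
    nlinarith [h4]
  · -- v > 0
    have h := bern_le hv0.le hv1 hxs
    rw [hdiv] at h
    have h2 : x ^ v ≤ s ^ v + v * (s ^ (v - 1) * (x - s)) := by
      have h3 := mul_le_mul_of_nonneg_left h hsv.le
      rw [mul_div_cancel₀ _ hsv.ne'] at h3
      calc x ^ v ≤ s ^ v * (1 + v * (x / s - 1)) := h3
        _ = s ^ v + v * (s ^ (v - 1) * (x - s)) := by rw [hsv1]; field_simp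
    have hvinv : v * v⁻¹ = 1 := mul_inv_cancel₀ hv0.ne'
    have hvipos : 0 < v⁻¹ := inv_pos.mpr hv0
    have h4 : v⁻¹ * x ^ v ≤ v⁻¹ * s ^ v + s ^ (v - 1) * (x - s) := by
      calc v⁻¹ * x ^ v ≤ v⁻¹ * (s ^ v + v * (s ^ (v - 1) * (x - s))) :=
            mul_le_mul_of_nonneg_left h2 hvipos.le
        _ = v⁻¹ * s ^ v + (v * v⁻¹) * (s ^ (v - 1) * (x - s)) := by ring
        _ = v⁻¹ * s ^ v + s ^ (v - 1) * (x - s) := by rw [hvinv]; ring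
    rw [div_eq_mul_inv]
    nlinarith [h4]

theorem stmt9 (A B : H →L[ℂ] H) (hA : 0 ≤ A) (hAu : IsUnit A) (hB : 0 ≤ B) (hBu : IsUnit B)
    (J : Set ℝ) (hJ : J ⊆ Set.Ioi 0) (hJA : spectrum ℝ A ⊆ J) (hJB : spectrum ℝ B ⊆ J)
    (v : ℝ) (hv : v ∈ Set.Ico (-1:ℝ) 0 ∪ Set.Ioc (0:ℝ) 1) (s : ℝ) (hs : s ∈ J) :
    Tsallis v A B ≤ ((s ^ v - 1) / v) • A + s ^ (v - 1) • (B - s • A) := by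
  have hs0 : 0 < s := hJ hs
  set a := CFC.sqrt A with ha_def
  have ha_nonneg : 0 ≤ a := CFC.sqrt_nonneg A
  have ha_sa : IsSelfAdjoint a := ha_nonneg.isSelfAdjoint
  have haa : a * a = A := CFC.sqrt_mul_sqrt_self A hA
  -- a is a unit
  obtain ⟨u, hu⟩ := hAu
  have h1 : a * (a * ↑u⁻¹) = 1 := by rw [← mul_assoc, haa, ← hu, Units.mul_inv]
  have h2 : (↑u⁻¹ * a) * a = 1 := by rw [mul_assoc, haa, ← hu, Units.inv_mul]
  have hbc : a * ↑u⁻¹ = ↑u⁻¹ * a := by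
    conv_lhs => rw [← one_mul (a * ↑u⁻¹), ← h2]
    rw [mul_assoc (↑u⁻¹ * a) a, h1, mul_one]
  have ha_u : IsUnit a := ⟨⟨a, a * ↑u⁻¹, h1, by rw [hbc, h2]⟩, rfl⟩
  set r := Ring.inverse a with hr_def
  have hr_star : star r = r := by
    rw [hr_def, ← Ring.inverse_star, ha_sa.star_eq]
  set C := r * B * r with hC_def
  have hC0 : 0 ≤ C := by
    have := star_left_conjugate_nonneg hB r
    rwa [hr_star] at this
  have hC_sa : IsSelfAdjoint C := hC0.isSelfAdjoint
  have hr_u : IsUnit r := isUnit_ringInverse.mpr ha_u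
  have hC_u : IsUnit C := (hr_u.mul hBu).mul hr_u
  have hspec : spectrum ℝ C ⊆ Set.Ioi 0 := by
    intro x hx
    have hx0 : 0 ≤ x := spectrum_nonneg_of_nonneg hC0 hx
    have hxne : x ≠ 0 := by
      rintro rfl
      exact spectrum.zero_notMem ℝ hC_u hx
    exact lt_of_le_of_ne hx0 (Ne.symm hxne)
  -- continuity
  have hcont_pow : ContinuousOn (fun x : ℝ => x ^ v) (spectrum ℝ C) := fun x hx =>
    (Real.continuousAt_rpow_const x v (Or.inl (hspec hx).ne')).continuousWithinAt
  set f : ℝ → ℝ := fun x => v⁻¹ * (x ^ v - 1) with hf_def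
  set d : ℝ := s ^ (v - 1) with hd_def
  set c : ℝ := (s ^ v - 1) / v - d * s with hc_def
  set g : ℝ → ℝ := fun x => c + d * x with hg_def
  have hcont_f : ContinuousOn f (spectrum ℝ C) :=
    (hcont_pow.sub continuousOn_const).const_smul v⁻¹
  have hcont_g : ContinuousOn g (spectrum ℝ C) := by fun_prop
  -- cfc computations
  have hcfc_f : cfc f C = v⁻¹ • (cfc (fun x : ℝ => x ^ v) C - 1) := by
    rw [hf_def]
    rw [cfc_const_mul _ (fun x : ℝ => x ^ v - 1) C (hcont_pow.sub continuousOn_const),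
        cfc_sub _ _ C hcont_pow continuousOn_const]
    congr 1
    rw [cfc_const 1 C hC_sa, map_one]
  have hcfc_g : cfc g C = c • (1 : H →L[ℂ] H) + d • C := by
    rw [hg_def]
    rw [show (fun x : ℝ => c + d * x) = fun x => (fun _ : ℝ => c) x + (d * ·) x from rfl]
    rw [cfc_add C _ _ continuousOn_const (by fun_prop), cfc_const c C hC_sa,
        cfc_const_mul_id d C hC_sa, Algebra.algebraMap_eq_smul_one]
  -- monotonicity and conjugation
  have hmono : cfc f C ≤ cfc g C := by
    refine cfc_mono (fun x hx => ?_) hcont_f hcont_g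
    have := scalar_key hv hs0 (hspec hx)
    rw [hf_def, hg_def, hc_def, hd_def]
    dsimp only
    linarith [this]
  have hconj : a * cfc f C * a ≤ a * cfc g C * a :=
    IsSelfAdjoint.conjugate_le_conjugate hmono ha_sa
  -- identify the two sides
  have haCa : a * C * a = B := by
    have e1 : a * C * a = (a * r) * B * (r * a) := by
      rw [hC_def]; simp only [mul_assoc]
    rw [e1, Ring.mul_inverse_cancel a ha_u, Ring.inverse_mul_cancel a ha_u, one_mul, mul_one]
  have hlhs : Tsallis v A B = a * cfc f C * a := by
    rw [Tsallis, opNatural, hcfc_f]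
    rw [mul_smul_comm, smul_mul_assoc, mul_sub, sub_mul, mul_one, haa]
  have hrhs : a * cfc g C * a = c • A + d • B := by
    rw [hcfc_g, mul_add, add_mul, mul_smul_comm, mul_smul_comm, smul_mul_assoc, smul_mul_assoc,
        mul_one, haa, haCa]
  rw [hlhs]
  refine hconj.trans_eq ?_
  rw [hrhs, hc_def]
  module
end

section
/- Let A, B be positive invertible operators satisfying mA ≤ B ≤ MA for scalars 0 < m < M, and v ≤ 1 with v ≠ 0. Then (ln_v m)/(M-m)·(MA - B) + (ln_v M)/(M-m)·(B - mA) ≤ T_v(A|B). -/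
set_option synthInstance.maxHeartbeats 1000000
set_option maxHeartbeats 1000000

variable {H : Type*} [NormedAddCommGroup H] [InnerProductSpace ℂ H] [CompleteSpace H]

/-- Concavity of `ln_v x = (x^v - 1)/v` on `(0, ∞)` for `v ≤ 1`, `v ≠ 0`. -/
lemma lnv_concaveOn {v : ℝ} (hv : v ≤ 1) (hv0 : v ≠ 0) :
    ConcaveOn ℝ (Set.Ioi 0) (fun x : ℝ => (x ^ v - 1) / v) := by
  have hint : interior (Set.Ioi (0 : ℝ)) = Set.Ioi 0 := isOpen_Ioi.interior_eq
  refine concaveOn_of_hasDerivWithinAt2_nonpos (f' := fun x => x ^ (v - 1))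
    (f'' := fun x => (v - 1) * x ^ (v - 2)) (convex_Ioi 0) ?_ ?_ ?_ ?_
  · intro x hx
    exact (((Real.continuousAt_rpow_const x v (Or.inl (ne_of_gt hx))).sub
      continuousAt_const).div_const v).continuousWithinAt
  · rw [hint]
    intro x hx
    have h1 : HasDerivAt (fun y : ℝ => y ^ v) (v * x ^ (v - 1)) x :=
      Real.hasDerivAt_rpow_const (Or.inl (ne_of_gt hx))
    have h2 := (h1.sub_const 1).div_const v
    rw [mul_div_cancel_left₀ _ hv0] at h2
    exact h2.hasDerivWithinAt
  · rw [hint]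
    intro x hx
    have h1 : HasDerivAt (fun y : ℝ => y ^ (v - 1)) ((v - 1) * x ^ (v - 1 - 1)) x :=
      Real.hasDerivAt_rpow_const (Or.inl (ne_of_gt hx))
    have e : v - 1 - 1 = v - 2 := by ring
    rw [e] at h1
    exact h1.hasDerivWithinAt
  · rw [hint]
    intro x hx
    exact mul_nonpos_of_nonpos_of_nonneg (by linarith) (Real.rpow_nonneg (le_of_lt hx) _)

/-- The chord inequality for `ln_v`. -/
lemma lnv_chord {v m M x : ℝ} (hv : v ≤ 1) (hv0 : v ≠ 0) (hm : 0 < m) (hmM : m < M)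
    (hx : x ∈ Set.Icc m M) :
    (m ^ v - 1) / v / (M - m) * (M - x) + (M ^ v - 1) / v / (M - m) * (x - m) ≤
      (x ^ v - 1) / v := by
  have hMm : 0 < M - m := by linarith
  obtain ⟨hx1, hx2⟩ := hx
  set a := (M - x) / (M - m) with ha_def
  set b := (x - m) / (M - m) with hb_def
  have ha : 0 ≤ a := div_nonneg (by linarith) hMm.le
  have hb : 0 ≤ b := div_nonneg (by linarith) hMm.le
  have hab : a + b = 1 := by
    rw [ha_def, hb_def, ← add_div]
    field_simp
    ring
  have hx' : a • m + b • M = x := by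
    rw [smul_eq_mul, smul_eq_mul, ha_def, hb_def]
    field_simp
    ring
  have hkey := (lnv_concaveOn hv hv0).2 (Set.mem_Ioi.mpr hm)
    (Set.mem_Ioi.mpr (hm.trans hmM)) ha hb hab
  rw [hx'] at hkey
  rw [smul_eq_mul, smul_eq_mul] at hkey
  calc (m ^ v - 1) / v / (M - m) * (M - x) + (M ^ v - 1) / v / (M - m) * (x - m)
      = a * ((m ^ v - 1) / v) + b * ((M ^ v - 1) / v) := by
        rw [ha_def, hb_def]; ring
    _ ≤ (x ^ v - 1) / v := hkey

theorem stmt11 (A B : H →L[ℂ] H) (hA : 0 ≤ A) (hAu : IsUnit A) (hB : 0 ≤ B) (hBu : IsUnit B)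
    (m M : ℝ) (hm : 0 < m) (hmM : m < M) (hmA : m • A ≤ B) (hMA : B ≤ M • A)
    (v : ℝ) (hv : v ≤ 1) (hv0 : v ≠ 0) :
    ((m ^ v - 1) / v / (M - m)) • (M • A - B) + ((M ^ v - 1) / v / (M - m)) • (B - m • A) ≤
      Tsallis v A B := by
  set S := CFC.sqrt A with hSdef
  have hS : 0 ≤ S := CFC.sqrt_nonneg (a := A)
  have hSsa : IsSelfAdjoint S := .of_nonneg hS
  have hSS : S * S = A := CFC.sqrt_mul_sqrt_self A hA
  -- S is a unit
  obtain ⟨u, hu⟩ := hAu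
  have hcomm : (u : H →L[ℂ] H) * S = S * u := by rw [hu, ← hSS, mul_assoc]
  have h1 : S * (S * ↑u⁻¹) = 1 := by rw [← mul_assoc, hSS, ← hu, Units.mul_inv]
  have hcomm' : (↑u⁻¹ : H →L[ℂ] H) * S = S * ↑u⁻¹ := by
    calc (↑u⁻¹ : H →L[ℂ] H) * S = ↑u⁻¹ * (S * ↑u) * ↑u⁻¹ := by
          rw [mul_assoc (↑u⁻¹ : H →L[ℂ] H), mul_assoc, Units.mul_inv, mul_one]
      _ = ↑u⁻¹ * (↑u * S) * ↑u⁻¹ := by rw [hcomm]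
      _ = S * ↑u⁻¹ := by rw [← mul_assoc, Units.inv_mul, one_mul]
  have h2 : (S * ↑u⁻¹) * S = 1 := by rw [mul_assoc, hcomm', h1]
  have hSu : IsUnit S := ⟨⟨S, S * ↑u⁻¹, h1, h2⟩, rfl⟩
  set Si := Ring.inverse S with hSi
  have hSiS : Si * S = 1 := Ring.inverse_mul_cancel S hSu
  have hSSi : S * Si = 1 := Ring.mul_inverse_cancel S hSu
  have hSisa : IsSelfAdjoint Si := by
    rw [hSi, IsSelfAdjoint, ← Ring.inverse_star, hSsa.star_eq]
  set C := Si * B * Si with hCdef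
  have hCnn : 0 ≤ C := by
    have h := star_left_conjugate_nonneg hB Si
    rwa [hSisa.star_eq] at h
  have hCsa : IsSelfAdjoint C := .of_nonneg hCnn
  have hBC : S * C * S = B := by
    rw [hCdef]
    simp only [mul_assoc]
    rw [hSiS, mul_one, ← mul_assoc, hSSi, one_mul]
  have hconj1 : Si * A * Si = 1 := by
    rw [← hSS]
    simp only [mul_assoc]
    rw [hSSi, mul_one, hSiS]
  have hm1 : m • (1 : H →L[ℂ] H) ≤ C := by
    have h := star_left_conjugate_le_conjugate hmA Si
    rw [hSisa.star_eq] at h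
    have e : Si * (m • A) * Si = m • (1 : H →L[ℂ] H) := by
      rw [mul_smul_comm, smul_mul_assoc, hconj1]
    rwa [e] at h
  have hM1 : C ≤ M • (1 : H →L[ℂ] H) := by
    have h := star_left_conjugate_le_conjugate hMA Si
    rw [hSisa.star_eq] at h
    have e : Si * (M • A) * Si = M • (1 : H →L[ℂ] H) := by
      rw [mul_smul_comm, smul_mul_assoc, hconj1]
    rwa [e] at h
  have hspec : spectrum ℝ C ⊆ Set.Icc m M := by
    intro x hx
    constructor
    · have h := (algebraMap_le_iff_le_spectrum (R := ℝ) (a := C) hCsa).mp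
        (by rw [Algebra.algebraMap_eq_smul_one]; exact hm1)
      exact h x hx
    · have h := (le_algebraMap_iff_spectrum_le (R := ℝ) (a := C) hCsa).mp
        (by rw [Algebra.algebraMap_eq_smul_one]; exact hM1)
      exact h x hx
  have hmpos : ∀ x ∈ spectrum ℝ C, 0 < x := fun x hx => lt_of_lt_of_le hm (hspec hx).1
  have hcont : ContinuousOn (fun x : ℝ => x ^ v) (spectrum ℝ C) := fun x hx =>
    (Real.continuousAt_rpow_const x v (Or.inl (hmpos x hx).ne')).continuousWithinAt
  set c1 := (m ^ v - 1) / v / (M - m) with hc1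
  set c2 := (M ^ v - 1) / v / (M - m) with hc2
  -- cfc computations
  have hgC : cfc (fun x : ℝ => c1 * (M - x) + c2 * (x - m)) C =
      c1 • (M • (1 : H →L[ℂ] H) - C) + c2 • (C - m • (1 : H →L[ℂ] H)) := by
    rw [cfc_add (a := C) (fun x : ℝ => c1 * (M - x)) (fun x : ℝ => c2 * (x - m))
      (by fun_prop) (by fun_prop)]
    rw [cfc_const_mul c1 (fun x : ℝ => M - x) C (by fun_prop),
      cfc_const_mul c2 (fun x : ℝ => x - m) C (by fun_prop)]
    rw [cfc_sub (fun _ : ℝ => M) (fun x : ℝ => x) C (by fun_prop) (by fun_prop),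
      cfc_sub (fun x : ℝ => x) (fun _ : ℝ => m) C (by fun_prop) (by fun_prop)]
    rw [cfc_const M C hCsa, cfc_const m C hCsa, cfc_id' ℝ C hCsa,
      Algebra.algebraMap_eq_smul_one, Algebra.algebraMap_eq_smul_one]
  have hfTC : cfc (fun x : ℝ => v⁻¹ * (x ^ v - 1)) C =
      v⁻¹ • (cfc (fun x : ℝ => x ^ v) C - 1) := by
    rw [cfc_const_mul v⁻¹ (fun x : ℝ => x ^ v - 1) C (hcont.sub continuousOn_const)]
    rw [cfc_sub (fun x : ℝ => x ^ v) (fun _ : ℝ => 1) C hcont (by fun_prop)]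
    rw [cfc_const 1 C hCsa, map_one]
  have hkey : cfc (fun x : ℝ => c1 * (M - x) + c2 * (x - m)) C ≤
      cfc (fun x : ℝ => v⁻¹ * (x ^ v - 1)) C := by
    refine cfc_mono (fun x hx => ?_) (by fun_prop) ?_
    · have h := lnv_chord hv hv0 hm hmM (hspec hx)
      rw [hc1, hc2]
      calc (m ^ v - 1) / v / (M - m) * (M - x) + (M ^ v - 1) / v / (M - m) * (x - m)
          ≤ (x ^ v - 1) / v := h
        _ = v⁻¹ * (x ^ v - 1) := by rw [div_eq_inv_mul]
    · exact ((hcont.sub continuousOn_const).const_smul v⁻¹)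
  have hmain : S * cfc (fun x : ℝ => c1 * (M - x) + c2 * (x - m)) C * S ≤
      S * cfc (fun x : ℝ => v⁻¹ * (x ^ v - 1)) C * S := by
    have h := star_left_conjugate_le_conjugate hkey S
    rwa [hSsa.star_eq] at h
  rw [hgC, hfTC] at hmain
  have lhs_eq : c1 • (M • A - B) + c2 • (B - m • A) =
      S * (c1 • (M • (1 : H →L[ℂ] H) - C) + c2 • (C - m • (1 : H →L[ℂ] H))) * S := by
    rw [← hBC, ← hSS]
    simp only [mul_add, add_mul, mul_sub, sub_mul, mul_smul_comm, smul_mul_assoc,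
      mul_one, one_mul]
  have rhs_eq : Tsallis v A B =
      S * (v⁻¹ • (cfc (fun x : ℝ => x ^ v) C - 1)) * S := by
    rw [Tsallis, opNatural, ← hSdef, ← hSi, ← hCdef, ← hSS]
    simp only [mul_sub, sub_mul, mul_smul_comm, smul_mul_assoc, mul_one, one_mul, smul_sub]
  rw [lhs_eq, rhs_eq]
  exact hmain
end

section
/- For t > 0 and v ∈ [-1,0), it holds that t·exp_{v/2}(t)^{(1-v)/2} ≤ exp_v(t) - 1 ≤ (t/2)(1 + exp_v(t)^{1-v}), where exp_v(x) = (1 + vx)^{1/v}. -/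
open Real Set

private noncomputable def FF (v s : ℝ) : ℝ := (1 + v * s) ^ (1 / v)
private noncomputable def ff (v s : ℝ) : ℝ := (1 + v * s) ^ ((1 - v) / v)
private noncomputable def ff' (v s : ℝ) : ℝ := (1 - v) * (1 + v * s) ^ ((1 - 2 * v) / v)

private lemma hasDerivAt_aff_rpow (v p s : ℝ) (h : 0 < 1 + v * s) :
    HasDerivAt (fun x => (1 + v * x) ^ p) (v * p * (1 + v * s) ^ (p - 1)) s := by
  have h1 : HasDerivAt (fun x : ℝ => 1 + v * x) v s := by
    simpa using ((hasDerivAt_id s).const_mul v).const_add 1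
  have h2 := (Real.hasDerivAt_rpow_const (x := 1 + v * s) (p := p) (Or.inl h.ne')).comp s h1
  rw [show v * p * (1 + v * s) ^ (p - 1) = p * (1 + v * s) ^ (p - 1) * v by ring]
  exact h2

private lemma hasDerivAt_ff (v s : ℝ) (hv : v ≠ 0) (h : 0 < 1 + v * s) :
    HasDerivAt (ff v) (ff' v s) s := by
  have := hasDerivAt_aff_rpow v ((1 - v) / v) s h
  have hcoef : v * ((1 - v) / v) = 1 - v := by field_simp
  have hexp : (1 - v) / v - 1 = (1 - 2 * v) / v := by field_simp; ring
  unfold ff ff'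
  convert this using 1
  rw [hcoef, hexp]

private lemma hasDerivAt_FF (v s : ℝ) (hv : v ≠ 0) (h : 0 < 1 + v * s) :
    HasDerivAt (FF v) (ff v s) s := by
  have := hasDerivAt_aff_rpow v (1 / v) s h
  have hcoef : v * (1 / v) = 1 := by field_simp
  have hexp : 1 / v - 1 = (1 - v) / v := by field_simp
  unfold FF ff
  convert this using 1
  rw [hcoef, one_mul, hexp]

private lemma convex_ff (v t : ℝ) (hv0 : v < 0) (ht : 0 < t) (hvt : 0 < 1 + v * t) :
    ConvexOn ℝ (Icc 0 t) (ff v) := by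
  have hvne : v ≠ 0 := ne_of_lt hv0
  have hpos : ∀ s ∈ Icc (0:ℝ) t, 0 < 1 + v * s := by
    intro s hs
    have : v * t ≤ v * s := mul_le_mul_of_nonpos_left hs.2 hv0.le
    linarith
  apply MonotoneOn.convexOn_of_deriv (convex_Icc 0 t)
  · intro s hs
    exact (hasDerivAt_ff v s hvne (hpos s hs)).continuousAt.continuousWithinAt
  · intro s hs
    rw [interior_Icc] at hs
    exact (hasDerivAt_ff v s hvne (hpos s ⟨hs.1.le, hs.2.le⟩)).differentiableAt.differentiableWithinAt
  · intro a ha b hb hab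
    rw [interior_Icc] at ha hb
    have hpa := hpos a ⟨ha.1.le, ha.2.le⟩
    have hpb := hpos b ⟨hb.1.le, hb.2.le⟩
    rw [(hasDerivAt_ff v a hvne hpa).deriv, (hasDerivAt_ff v b hvne hpb).deriv]
    unfold ff'
    have hba : 1 + v * b ≤ 1 + v * a := by nlinarith [mul_le_mul_of_nonpos_left hab hv0.le]
    have hz : (1 - 2 * v) / v ≤ 0 :=
      div_nonpos_of_nonneg_of_nonpos (by linarith) hv0.le
    have := Real.rpow_le_rpow_of_nonpos hpb hba hz
    have h1v : (0:ℝ) ≤ 1 - v := by linarith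
    exact mul_le_mul_of_nonneg_left this h1v

theorem stmt14 (t v : ℝ) (ht : 0 < t) (hv : -1 ≤ v) (hv0 : v < 0) (hvt : 0 < 1 + v * t) :
    t * ((1 + (v / 2) * t) ^ (1 / (v / 2))) ^ ((1 - v) / 2) ≤ (1 + v * t) ^ (1 / v) - 1 ∧
      (1 + v * t) ^ (1 / v) - 1 ≤ (t / 2) * (1 + ((1 + v * t) ^ (1 / v)) ^ (1 - v)) := by
  have hvne : v ≠ 0 := ne_of_lt hv0
  have hpos : ∀ s ∈ Icc (0:ℝ) t, 0 < 1 + v * s := by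
    intro s hs
    have : v * t ≤ v * s := mul_le_mul_of_nonpos_left hs.2 hv0.le
    linarith
  have hcvx := convex_ff v t hv0 ht hvt
  have hmem0 : (0:ℝ) ∈ Icc (0:ℝ) t := ⟨le_rfl, ht.le⟩
  have hmemt : t ∈ Icc (0:ℝ) t := ⟨ht.le, le_rfl⟩
  have hhalf : ∀ s ∈ Icc (0:ℝ) t, s / 2 ∈ Icc (0:ℝ) t := by
    intro s hs
    constructor <;> [linarith [hs.1]; linarith [hs.1, hs.2]]
  have hff0 : ff v 0 = 1 := by simp [ff]
  have hFF0 : FF v 0 = 1 := by simp [FF]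
  constructor
  · -- Lower bound
    have hderiv : ∀ s ∈ Icc (0:ℝ) t,
        HasDerivAt (fun s => FF v s - 1 - s * ff v (s / 2))
          (ff v s - (1 * ff v (s / 2) + s * (ff' v (s / 2) * (1 / 2)))) s := by
      intro s hs
      have h1 := hasDerivAt_FF v s hvne (hpos s hs)
      have h2 : HasDerivAt (fun s : ℝ => ff v (s / 2)) (ff' v (s / 2) * (1 / 2)) s := by
        have := (hasDerivAt_ff v (s / 2) hvne (hpos (s / 2) (hhalf s hs))).comp s
          ((hasDerivAt_id s).div_const 2)
        simpa [Function.comp_def] using this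
      exact (h1.sub_const 1).sub ((hasDerivAt_id s).mul h2)
    have hmono : MonotoneOn (fun s => FF v s - 1 - s * ff v (s / 2)) (Icc 0 t) := by
      apply monotoneOn_of_deriv_nonneg (convex_Icc 0 t)
      · exact fun s hs => (hderiv s hs).continuousAt.continuousWithinAt
      · intro s hs
        rw [interior_Icc] at hs
        exact (hderiv s ⟨hs.1.le, hs.2.le⟩).differentiableAt.differentiableWithinAt
      · intro s hs
        rw [interior_Icc] at hs
        have hsI : s ∈ Icc (0:ℝ) t := ⟨hs.1.le, hs.2.le⟩
        rw [(hderiv s hsI).deriv]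
        have hlt : s / 2 < s := by linarith [hs.1]
        have hsl := hcvx.le_slope_of_hasDerivAt (hhalf s hsI) hsI hlt
          (hasDerivAt_ff v (s / 2) hvne (hpos (s / 2) (hhalf s hsI)))
        rw [slope_def_field] at hsl
        have hd : (0:ℝ) < s - s / 2 := by linarith [hs.1]
        rw [le_div_iff₀ hd] at hsl
        nlinarith [hsl]
    have h0t := hmono hmem0 hmemt ht.le
    simp only [hFF0, zero_mul, sub_zero, sub_self] at h0t
    have hrw : ((1 + v / 2 * t) ^ (1 / (v / 2))) ^ ((1 - v) / 2) = ff v (t / 2) := by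
      unfold ff
      have hb : (0:ℝ) ≤ 1 + v / 2 * t := by
        have := hpos (t / 2) (hhalf t hmemt)
        nlinarith
      rw [← Real.rpow_mul hb]
      have h1 : v / 2 * t = v * (t / 2) := by ring
      have h2 : 1 / (v / 2) * ((1 - v) / 2) = (1 - v) / v := by field_simp
      rw [h1, h2]
    rw [hrw]
    unfold FF at h0t
    linarith
  · -- Upper bound
    have hderiv : ∀ s ∈ Icc (0:ℝ) t,
        HasDerivAt (fun s => s / 2 * (1 + ff v s) - (FF v s - 1))
          (1 / 2 * (1 + ff v s) + s / 2 * ff' v s - ff v s) s := by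
      intro s hs
      have h1 := hasDerivAt_FF v s hvne (hpos s hs)
      have h2 : HasDerivAt (fun s : ℝ => 1 + ff v s) (ff' v s) s :=
        (hasDerivAt_ff v s hvne (hpos s hs)).const_add 1
      have h3 : HasDerivAt (fun s : ℝ => s / 2) (1 / 2) s := by
        simpa using (hasDerivAt_id s).div_const 2
      exact (h3.mul h2).sub (h1.sub_const 1)
    have hmono : MonotoneOn (fun s => s / 2 * (1 + ff v s) - (FF v s - 1)) (Icc 0 t) := by
      apply monotoneOn_of_deriv_nonneg (convex_Icc 0 t)
      · exact fun s hs => (hderiv s hs).continuousAt.continuousWithinAt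
      · intro s hs
        rw [interior_Icc] at hs
        exact (hderiv s ⟨hs.1.le, hs.2.le⟩).differentiableAt.differentiableWithinAt
      · intro s hs
        rw [interior_Icc] at hs
        have hsI : s ∈ Icc (0:ℝ) t := ⟨hs.1.le, hs.2.le⟩
        rw [(hderiv s hsI).deriv]
        have hsl := hcvx.slope_le_of_hasDerivAt hmem0 hsI hs.1
          (hasDerivAt_ff v s hvne (hpos s hsI))
        rw [slope_def_field] at hsl
        rw [div_le_iff₀ (by linarith [hs.1] : (0:ℝ) < s - 0)] at hsl
        rw [hff0] at hsl
        nlinarith [hsl]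
    have h0t := hmono hmem0 hmemt ht.le
    simp only [hFF0, zero_div, zero_mul, sub_self, sub_zero] at h0t
    have hrw : ((1 + v * t) ^ (1 / v)) ^ (1 - v) = ff v t := by
      unfold ff
      rw [← Real.rpow_mul hvt.le]
      congr 1
      field_simp
    rw [hrw]
    unfold FF at h0t
    linarith
end
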